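/- The set S = {x ∈ ℤ² : 2x₁ + 3x₂ ≢ ±1 and 2x₁ + 3x₂ ≢ ±5 (mod 13)} satisfies N_S(x) ≤ 5 for every x ∈ S and has density exactly 9/13. -/

import Mathlib

open Filter Topology

/-- `y` is a neighbor of `x` in the 8-point (Moore) neighborhood of `ℤ²`. -/
def IsNbr (x y : ℤ × ℤ) : Prop :=
  y ≠ x ∧ |y.1 - x.1| ≤ 1 ∧ |y.2 - x.2| ≤ 1

/-- `N_S(x)`: the number of neighbors of `x` lying in `S`. -/
noncomputable def nbrCount (S : Set (ℤ × ℤ)) (x : ℤ × ℤ) : ℕ :=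
  Set.ncard {y ∈ S | IsNbr x y}

/-- The box `B_r = {x : |x₁| < r, |x₂| < r}`. -/
def box (r : ℕ) : Set (ℤ × ℤ) :=
  {x | |x.1| < (r : ℤ) ∧ |x.2| < (r : ℤ)}

/-- `S` has density `d`: the sequence `|S ∩ B_r| / (2r-1)²` tends to `d`. -/
def HasDensity (S : Set (ℤ × ℤ)) (d : ℝ) : Prop :=
  Tendsto (fun r : ℕ => (Set.ncard (S ∩ box r) : ℝ) / (2 * (r : ℝ) - 1) ^ 2) atTop (𝓝 d)

/-- The set of `x ∈ ℤ²` with `2x₁ + 3x₂ ≢ ±1, ±5 (mod 13)`. -/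
def cubicResidueSet : Set (ℤ × ℤ) :=
  {x | ¬ 2 * x.1 + 3 * x.2 ≡ 1 [ZMOD 13] ∧ ¬ 2 * x.1 + 3 * x.2 ≡ -1 [ZMOD 13] ∧
       ¬ 2 * x.1 + 3 * x.2 ≡ 5 [ZMOD 13] ∧ ¬ 2 * x.1 + 3 * x.2 ≡ -5 [ZMOD 13]}

/-!
`cubicResidueSet` is the preimage of the 9 residues outside `{±1, ±5}` under the linear form
`x ↦ 2x₁ + 3x₂` into `ZMod 13`. Because `2` is invertible mod 13, along every row of the box `B_r`
this form runs through the residues periodically, so each row meets the set in `9/13` of its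
`2r - 1` points up to an error of at most `9`; this gives the density. The neighbours of a point of
residue `c` have residues `c ± 1, c ± 2, c ± 3, c ± 5`, and for each of the 9 admissible `c` at most
5 of these are admissible again, which is a finite check.
-/

open scoped Finset

def mooreOffsets : Finset (ℤ × ℤ) :=
  {(-1, -1), (0, -1), (1, -1), (-1, 0), (1, 0), (-1, 1), (0, 1), (1, 1)}

lemma isNbr_iff_sub_mem_mooreOffsets (x y : ℤ × ℤ) : IsNbr x y ↔ y - x ∈ mooreOffsets := by
  obtain ⟨⟨x₁, x₂⟩, ⟨y₁, y₂⟩⟩ := (x, y)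
  simp only [IsNbr, mooreOffsets, Finset.mem_insert, Finset.mem_singleton, Prod.ext_iff,
    Prod.fst_sub, Prod.snd_sub, ne_eq, abs_le]
  omega

lemma nbrCount_eq_card_filter_mooreOffsets (S : Set (ℤ × ℤ)) [DecidablePred (· ∈ S)]
    (x : ℤ × ℤ) : nbrCount S x = #{d ∈ mooreOffsets | x + d ∈ S} := by
  have hnbrs : {y ∈ S | IsNbr x y} = (x + ·) '' ↑{d ∈ mooreOffsets | x + d ∈ S} := by
    ext y
    simp only [Set.mem_ofPred_eq, isNbr_iff_sub_mem_mooreOffsets, Finset.coe_filter,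
      Set.mem_image]
    constructor
    · rintro ⟨hy, hd⟩
      exact ⟨y - x, by simpa using ⟨hd, hy⟩, by abel⟩
    · rintro ⟨d, ⟨hd, hS⟩, rfl⟩
      simpa using ⟨hS, hd⟩
  rw [nbrCount, hnbrs, Set.ncard_image_of_injective _ (add_right_injective x),
    Set.ncard_coe_finset]

def linearResidueSet {n : ℕ} (a b : ZMod n) (T : Finset (ZMod n)) : Set (ℤ × ℤ) :=
  {x | a * x.1 + b * x.2 ∈ T}

lemma add_mem_linearResidueSet_iff {n : ℕ} (a b : ZMod n) (T : Finset (ZMod n)) (x d : ℤ × ℤ) :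
    x + d ∈ linearResidueSet a b T ↔ (a * x.1 + b * x.2) + (a * d.1 + b * d.2) ∈ T := by
  simp only [linearResidueSet, Set.mem_ofPred_eq, Prod.fst_add, Prod.snd_add, Int.cast_add]
  ring_nf

lemma abs_sum_sub_card_mul_le {ι : Type*} (s : Finset ι) (f : ι → ℝ) {m C : ℝ}
    (h : ∀ i ∈ s, |f i - m| ≤ C) : |∑ i ∈ s, f i - #s * m| ≤ #s * C := by
  have hsum : ∑ i ∈ s, f i - #s * m = ∑ i ∈ s, (f i - m) := by
    rw [Finset.sum_sub_distrib, Finset.sum_const, nsmul_eq_mul]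
  calc |∑ i ∈ s, f i - #s * m| ≤ ∑ i ∈ s, |f i - m| := hsum ▸ Finset.abs_sum_le_sum_abs _ _
    _ ≤ #s * C := by simpa using Finset.sum_le_card_nsmul s _ C h

lemma abs_card_filter_Ico_modEq_sub_le {n : ℤ} (hn : 0 < n) {a b : ℤ} (hab : a ≤ b) (v : ℤ) :
    |(#{x ∈ Finset.Ico a b | x ≡ v [ZMOD n]} : ℝ) - (b - a) / n| ≤ 1 := by
  have hcard := Int.Ico_filter_modEq_card a b hn v
  set p : ℚ := (a - v) / n
  set q : ℚ := (b - v) / n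
  have hpq : p ≤ q := by
    have : (a : ℚ) ≤ b := by exact_mod_cast hab
    exact div_le_div_of_nonneg_right (by linarith) (by positivity)
  have hceil : ⌈p⌉ ≤ ⌈q⌉ := Int.ceil_mono hpq
  rw [max_eq_left (by omega)] at hcard
  have hdiff : (b - a : ℚ) / n = q - p := by ring
  have hrat : |(#{x ∈ Finset.Ico a b | x ≡ v [ZMOD n]} : ℚ) - (b - a) / n| ≤ 1 := by
    have hc : (#{x ∈ Finset.Ico a b | x ≡ v [ZMOD n]} : ℚ) = ⌈q⌉ - ⌈p⌉ := by exact_mod_cast hcard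
    rw [hc, hdiff, abs_le]
    constructor <;> linarith [Int.le_ceil p, Int.le_ceil q, Int.ceil_lt_add_one p,
      Int.ceil_lt_add_one q]
  exact_mod_cast hrat

lemma abs_card_filter_Ico_mul_add_mem_sub_le {n : ℕ} [NeZero n] {u : ZMod n} (hu : IsUnit u)
    (c : ZMod n) (T : Finset (ZMod n)) {a b : ℤ} (hab : a ≤ b) :
    |(#{x ∈ Finset.Ico a b | u * ((x : ℤ) : ZMod n) + c ∈ T} : ℝ) - #T * ((b - a) / n)| ≤ #T := by
  have hfiber (t : ZMod n) (ht : t ∈ T) :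
      {x ∈ {x ∈ Finset.Ico a b | u * ((x : ℤ) : ZMod n) + c ∈ T} |
        u * ((x : ℤ) : ZMod n) + c = t} =
      {x ∈ Finset.Ico a b | x ≡ ((hu.unit⁻¹ * (t - c) : ZMod n).cast : ℤ) [ZMOD n]} := by
    ext x
    simp only [Finset.mem_filter, ← ZMod.intCast_eq_intCast_iff, ZMod.intCast_zmod_cast,
      Units.eq_inv_mul_iff_mul_eq, IsUnit.unit_spec, eq_sub_iff_add_eq]
    constructor
    · rintro ⟨⟨hx, -⟩, rfl⟩
      exact ⟨hx, rfl⟩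
    · rintro ⟨hx, h⟩
      exact ⟨⟨hx, h ▸ ht⟩, h⟩
  rw [Finset.card_eq_sum_card_fiberwise
    (s := {x ∈ Finset.Ico a b | u * ((x : ℤ) : ZMod n) + c ∈ T}) (t := T)
    fun x hx => (Finset.mem_filter.mp hx).2]
  push_cast
  refine (abs_sum_sub_card_mul_le T _ fun t ht => ?_).trans_eq (mul_one _)
  rw [hfiber t ht]
  exact_mod_cast abs_card_filter_Ico_modEq_sub_le (by exact_mod_cast NeZero.pos n) hab _

lemma box_eq_coe_Ico_product (r : ℕ) :
    box r = ↑(Finset.Ico (1 - r : ℤ) r ×ˢ Finset.Ico (1 - r : ℤ) r) := by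
  ext x
  simp only [box, Set.mem_ofPred_eq, Finset.coe_product, Finset.coe_Ico, Set.mem_prod,
    Set.mem_Ico, abs_lt]
  omega

lemma abs_ncard_linearResidueSet_inter_box_sub_le {n : ℕ} [NeZero n] {a : ZMod n} (ha : IsUnit a)
    (b : ZMod n) (T : Finset (ZMod n)) {r : ℕ} (hr : 1 ≤ r) :
    |((linearResidueSet a b T ∩ box r).ncard : ℝ) - #T / n * (2 * (r : ℝ) - 1) ^ 2| ≤
      #T * (2 * (r : ℝ) - 1) := by
  set I := Finset.Ico (1 - r : ℤ) r
  have hI : (#I : ℝ) = 2 * r - 1 := by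
    have h : ((r - (1 - r) : ℤ).toNat : ℤ) = 2 * r - 1 := by omega
    rw [Int.card_Ico]
    exact_mod_cast h
  have hinter : linearResidueSet a b T ∩ box r =
      ↑{x ∈ I ×ˢ I | a * ((x.1 : ℤ) : ZMod n) + b * ((x.2 : ℤ) : ZMod n) ∈ T} := by
    rw [box_eq_coe_Ico_product, Set.inter_comm, Finset.coe_filter]
    rfl
  have hrows : #{x ∈ I ×ˢ I | a * ((x.1 : ℤ) : ZMod n) + b * ((x.2 : ℤ) : ZMod n) ∈ T} =
      ∑ y ∈ I, #{x ∈ I | a * ((x : ℤ) : ZMod n) + b * y ∈ T} := by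
    simp only [Finset.card_filter, Finset.sum_product_right]
  rw [hinter, Set.ncard_coe_finset, hrows]
  have hrow := fun y (_ : y ∈ I) => abs_card_filter_Ico_mul_add_mem_sub_le ha (b * y) T
    (show 1 - (r : ℤ) ≤ r by omega)
  calc _ = |∑ y ∈ I, (#{x ∈ I | a * ((x : ℤ) : ZMod n) + b * y ∈ T} : ℝ) -
        #I * (#T * ((r - (1 - r : ℤ)) / n))| := by
        push_cast
        rw [hI]
        ring_nf
    _ ≤ #I * #T := abs_sum_sub_card_mul_le I _ hrow
    _ = _ := by rw [hI]; ring

lemma hasDensity_of_abs_ncard_inter_box_sub_le {S : Set (ℤ × ℤ)} {d C : ℝ}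
    (h : ∀ r : ℕ, 1 ≤ r →
      |((S ∩ box r).ncard : ℝ) - d * (2 * r - 1) ^ 2| ≤ C * (2 * r - 1)) :
    HasDensity S d := by
  have hside : Tendsto (fun r : ℕ => 2 * (r : ℝ) - 1) atTop atTop :=
    tendsto_atTop_add_const_right _ _ (tendsto_natCast_atTop_atTop.const_mul_atTop two_pos)
  rw [HasDensity, tendsto_iff_norm_sub_tendsto_zero]
  refine squeeze_zero' (Eventually.of_forall fun _ => norm_nonneg _) ?_
    (tendsto_const_nhds.div_atTop hside : Tendsto (fun r : ℕ => C / (2 * (r : ℝ) - 1)) _ _)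
  filter_upwards [eventually_ge_atTop 1] with r hr
  have hpos : (0 : ℝ) < 2 * r - 1 := by
    have : (1 : ℝ) ≤ r := by exact_mod_cast hr
    linarith
  have hsq := pow_pos hpos 2
  rw [Real.norm_eq_abs, div_sub' hsq.ne', abs_div, abs_of_pos hsq, div_le_div_iff₀ hsq hpos,
    mul_comm _ d]
  calc _ ≤ C * (2 * r - 1) * (2 * r - 1) := by gcongr; exact h r hr
    _ = _ := by ring

theorem hasDensity_linearResidueSet {n : ℕ} [NeZero n] {a : ZMod n} (ha : IsUnit a)
    (b : ZMod n) (T : Finset (ZMod n)) : HasDensity (linearResidueSet a b T) (#T / n) :=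
  hasDensity_of_abs_ncard_inter_box_sub_le fun _ hr =>
    abs_ncard_linearResidueSet_inter_box_sub_le ha b T hr

def forbiddenResidues : Finset (ZMod 13) := {1, -1, 5, -5}

lemma cubicResidueSet_eq : cubicResidueSet = linearResidueSet 2 3 forbiddenResiduesᶜ := by
  ext x
  have hcast (m : ℤ) :
      2 * x.1 + 3 * x.2 ≡ m [ZMOD 13] ↔ ((2 * x.1 + 3 * x.2 : ℤ) : ZMod 13) = m :=
    (ZMod.intCast_eq_intCast_iff _ _ 13).symm
  simp only [cubicResidueSet, linearResidueSet, forbiddenResidues, hcast, Set.mem_ofPred_eq,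
    Finset.mem_compl, Finset.mem_insert, Finset.mem_singleton]
  push_cast
  tauto

lemma card_filter_mooreOffsets_le_five (c : ZMod 13) (hc : c ∉ forbiddenResidues) :
    #{d ∈ mooreOffsets | c + (2 * d.1 + 3 * d.2) ∉ forbiddenResidues} ≤ 5 := by
  revert c; decide

lemma nbrCount_cubicResidueSet_le_five (x : ℤ × ℤ) (hx : x ∈ cubicResidueSet) :
    nbrCount cubicResidueSet x ≤ 5 := by
  classical
  rw [cubicResidueSet_eq] at hx ⊢
  rw [nbrCount_eq_card_filter_mooreOffsets]
  simp only [add_mem_linearResidueSet_iff, Finset.mem_compl]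
  exact card_filter_mooreOffsets_le_five _ (Finset.mem_compl.mp hx)

theorem cubicResidueSet_degree_five_density :
    (∀ x ∈ cubicResidueSet, nbrCount cubicResidueSet x ≤ 5) ∧
    HasDensity cubicResidueSet (9 / 13) := by
  refine ⟨nbrCount_cubicResidueSet_le_five, ?_⟩
  have h2 : IsUnit (2 : ZMod 13) := IsUnit.of_mul_eq_one 7 (by decide)
  have hcard : #forbiddenResiduesᶜ = 9 := by decide
  simpa [cubicResidueSet_eq, hcard] using hasDensity_linearResidueSet h2 3 forbiddenResiduesᶜ
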